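/- arXiv:2210.14762 — 5 statements merged into one kernel-verified Lean document; each statement's English description precedes it below -/
import Mathlib

section
/- Every 3-colorable finite simple graph is word-representable. -/
/-- Letters `x` and `y` alternate in the word `w`: after deleting all letters other than
`x` and `y`, no two consecutive letters of the remaining word are equal. -/
def Alternate {V : Type*} [DecidableEq V] (w : List V) (x y : V) : Prop :=
  (w.filter (fun z => decide (z = x ∨ z = y))).Chain' (· ≠ ·)

/-- A simple graph `G` is word-representable if there is a word over its vertex set,
containing every vertex, such that two distinct letters alternate in the word
if and only if they are adjacent in `G`. -/
def WordRepresentable {V : Type*} [DecidableEq V] (G : SimpleGraph V) : Prop :=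
  ∃ w : List V, (∀ v : V, v ∈ w) ∧ ∀ x y : V, x ≠ y → (G.Adj x y ↔ Alternate w x y)

/-- `rel` is an orientation of the simple graph `G`: every arc lies on an edge of `G`,
and every edge of `G` is oriented in exactly one of the two directions. -/
def IsOrientation {V : Type*} (G : SimpleGraph V) (rel : V → V → Prop) : Prop :=
  (∀ x y, rel x y → G.Adj x y) ∧ (∀ x y, G.Adj x y → (rel x y ↔ ¬ rel y x))

/-- An orientation `rel` of `G` is semi-transitive: it is acyclic, and for every directed
path `p 0 → p 1 → ⋯ → p k`, either the endpoints are non-adjacent in `G`, or there is an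
arc `p i → p j` for all `i < j`. -/
def IsSemiTransitive {V : Type*} (G : SimpleGraph V) (rel : V → V → Prop) : Prop :=
  (∀ v, ¬ Relation.TransGen rel v v) ∧
  ∀ (k : ℕ) (p : Fin (k + 1) → V),
    (∀ i : Fin k, rel (p i.castSucc) (p i.succ)) →
    (¬ G.Adj (p 0) (p (Fin.last k)) ∨ ∀ i j : Fin (k + 1), i < j → rel (p i) (p j))

/-- `v` is obtained from `u` by deleting the first letter and appending a letter at the end:
`v i = u (i+1)` for all `i < n - 1`. -/
def debruijnShift (n k : ℕ) (u v : Fin n → Fin k) : Prop :=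
  ∀ (i : ℕ) (h : i + 1 < n), v ⟨i, Nat.lt_of_succ_lt h⟩ = u ⟨i + 1, h⟩

/-- The simplified de Bruijn graph `S(n,k)`: vertices are words of length `n` over a
`k`-letter alphabet; distinct words are adjacent if one is obtained from the other by
deleting the first letter and appending a letter at the end. -/
def simplifiedDeBruijn (n k : ℕ) : SimpleGraph (Fin n → Fin k) :=
  SimpleGraph.fromRel (debruijnShift n k)

/-!
Fix a proper colouring with colours `0`, `1`, `2`. The word is `P₁ ⋯ Pₘ σ Q₁ ⋯ Qₙ`, where the
`Pᵢ` and `Qⱼ` are permutations of the vertices and `σ` lists the vertices of colour `1`. The `Pᵢ`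
list the colour classes in the order `1, 0, 2` and the `Qⱼ` in the order `0, 2, 1`, so the word
restricted to the ends of an edge is `(xy)ᵏ` (colours `0` and `2`) or `(uv)ᵏ u (vu)ˡ` (`u` of
colour `1`): they alternate. A non-edge between two colour classes that are consecutive in one of
these orders is broken by an extra permutation of that phase in which its two ends are
transposed, and two vertices of the same colour occur in both orders among the `Pᵢ`.
-/

open List

namespace WordRepresentation

section TwoLetterWords

variable {α : Type*} {x y : α}

theorem isChain_ne_cons_flatten_replicate (hxy : x ≠ y) (n : ℕ) :
    (y :: (replicate n [x, y]).flatten).IsChain (· ≠ ·) := by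
  induction n with
  | zero => simp
  | succ n ih => simpa [replicate_succ, hxy, hxy.symm] using ih

theorem flatten_replicate_pair_append (x y : α) (n : ℕ) :
    (replicate n [x, y]).flatten ++ [x] = x :: (replicate n [y, x]).flatten := by
  induction n with
  | zero => rfl
  | succ n ih => simp [replicate_succ, ih]

theorem isChain_ne_flatten_replicate_append (hxy : x ≠ y) (r s : ℕ) :
    ((replicate r [x, y]).flatten ++ (replicate s [x, y]).flatten).IsChain (· ≠ ·) := by
  rw [← flatten_append, ← replicate_add]
  exact (isChain_ne_cons_flatten_replicate hxy _).tail

theorem isChain_ne_flatten_replicate_append_cons (hxy : x ≠ y) (r s : ℕ) :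
    ((replicate r [x, y]).flatten ++ [x] ++ (replicate s [y, x]).flatten).IsChain (· ≠ ·) := by
  rw [flatten_replicate_pair_append, cons_append, ← flatten_append, ← replicate_add]
  exact isChain_ne_cons_flatten_replicate hxy.symm _

theorem forall_eq_of_isChain_ne_flatten_cons {s : List α} {L : List (List α)}
    (hs : s = [x, y] ∨ s = [y, x]) (hL : ∀ t ∈ L, t = [x, y] ∨ t = [y, x])
    (h : (s :: L).flatten.IsChain (· ≠ ·)) : ∀ t ∈ L, t = s := by
  induction L generalizing s with
  | nil => simp
  | cons t L ih =>
    have ht := hL t mem_cons_self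
    have hst : t = s := by
      rcases hs with rfl | rfl <;> rcases ht with rfl | rfl <;> simp_all
    subst hst
    rw [flatten_cons] at h
    simpa using ih ht (fun u hu => hL u (mem_cons_of_mem _ hu)) (isChain_append.1 h).2.1

theorem not_isChain_ne_flatten {L : List (List α)} (hxy : x ≠ y)
    (hL : ∀ t ∈ L, t = [x, y] ∨ t = [y, x]) (hxy_mem : [x, y] ∈ L) (hyx_mem : [y, x] ∈ L) :
    ¬ L.flatten.IsChain (· ≠ ·) := by
  intro h
  obtain _ | ⟨s, L⟩ := L
  · simp at hxy_mem
  have hall := forall_eq_of_isChain_ne_flatten_cons (hL s mem_cons_self)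
    (fun t ht => hL t (mem_cons_of_mem _ ht)) h
  have hmem : ∀ t ∈ s :: L, t = s := by simpa using hall
  exact hxy (cons.inj ((hmem _ hxy_mem).trans (hmem _ hyx_mem).symm)).1

end TwoLetterWords

section Restriction

variable {α : Type*} [DecidableEq α]

def restrictPair (x y : α) (w : List α) : List α :=
  w.filter fun z => decide (z = x ∨ z = y)

theorem alternate_iff_isChain_restrictPair {w : List α} {x y : α} :
    Alternate w x y ↔ (restrictPair x y w).IsChain (· ≠ ·) :=
  Iff.rfl

theorem restrictPair_comm (x y : α) : restrictPair x y = restrictPair y x :=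
  funext fun _ => filter_congr fun _ _ => decide_eq_decide.2 or_comm

theorem alternate_comm {w : List α} {x y : α} : Alternate w x y ↔ Alternate w y x := by
  rw [alternate_iff_isChain_restrictPair, alternate_iff_isChain_restrictPair, restrictPair_comm]

theorem restrictPair_eq_singleton {l : List α} {x y : α} (hl : l.Nodup) (hx : x ∈ l)
    (hy : y ∉ l) : restrictPair x y l = [x] := by
  refine perm_singleton.1 ((perm_ext_iff_of_nodup (hl.filter _) (nodup_singleton x)).2 ?_)
  intro z
  simp only [mem_filter, decide_eq_true_eq, mem_singleton]
  constructor
  · rintro ⟨hz, rfl | rfl⟩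
    exacts [rfl, absurd hz hy]
  · rintro rfl
    exact ⟨hx, Or.inl rfl⟩

theorem restrictPair_eq_nil {l : List α} {x y : α} (hx : x ∉ l) (hy : y ∉ l) :
    restrictPair x y l = [] :=
  filter_eq_nil_iff.2 fun z hz h => by
    rcases of_decide_eq_true h with rfl | rfl
    exacts [hx hz, hy hz]

end Restriction

section SortedBy

variable {V β : Type*} [Fintype V] [LinearOrder β]

noncomputable def sortedBy (k : V → β) : List V :=
  Finset.univ.toList.mergeSort fun a b => k a ≤ k b

theorem nodup_sortedBy (k : V → β) : (sortedBy k).Nodup :=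
  (mergeSort_perm _ _).nodup_iff.2 (Finset.nodup_toList _)

theorem mem_sortedBy (k : V → β) (v : V) : v ∈ sortedBy k :=
  (mergeSort_perm _ _).mem_iff.2 (Finset.mem_toList.2 (Finset.mem_univ v))

theorem pairwise_sortedBy (k : V → β) : (sortedBy k).Pairwise fun a b => k a ≤ k b := by
  simpa [sortedBy] using pairwise_mergeSort (le := fun a b => decide (k a ≤ k b))
    (fun a b c hab hbc => by simpa using le_trans (by simpa using hab) (by simpa using hbc))
    (fun a b => by simpa using le_total (k a) (k b)) Finset.univ.toList

theorem restrictPair_sortedBy [DecidableEq V] {k : V → β} {x y : V} (h : k x < k y) :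
    restrictPair x y (sortedBy k) = [x, y] := by
  have hxy : x ≠ y := fun hxy => h.ne (congrArg k hxy)
  have hperm : restrictPair x y (sortedBy k) ~ [x, y] := by
    refine (perm_ext_iff_of_nodup ((nodup_sortedBy k).filter _) (by simpa using hxy)).2 ?_
    intro z
    simp [mem_sortedBy]
  refine (perm_pair.1 hperm).resolve_right fun hyx => ?_
  have hsorted := (pairwise_sortedBy k).filter fun z => decide (z = x ∨ z = y)
  rw [← restrictPair, hyx, pairwise_pair] at hsorted
  exact not_le.2 h hsorted

theorem restrictPair_sortedBy_of_injective [DecidableEq V] {k : V → β}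
    (hk : Function.Injective k) {x y : V} (hxy : x ≠ y) :
    restrictPair x y (sortedBy k) = [x, y] ∨ restrictPair x y (sortedBy k) = [y, x] := by
  rcases (hk.ne hxy).lt_or_gt with h | h
  · exact Or.inl (restrictPair_sortedBy h)
  · exact Or.inr (restrictPair_comm x y ▸ restrictPair_sortedBy h)

end SortedBy

theorem injective_toLex_prod {V β γ : Type*} (f : V → β) {g : V → γ}
    (hg : Function.Injective g) : Function.Injective fun v => toLex (f v, g v) :=
  fun _ _ h => hg (congrArg (fun p => (ofLex p).2) h)

section Phase

variable {V : Type*} [DecidableEq V]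

/-- Levels are kept multiples of `3`, so that `u` and `v` can be transposed inside the gap
between the consecutive levels `ℓ u` and `ℓ v = ℓ u + 3` without passing any other vertex. -/
def transposeLevel (ℓ : V → ℕ) (u v : V) : V → ℕ :=
  Function.update (Function.update ℓ v (ℓ u + 1)) u (ℓ u + 2)

theorem transposeLevel_lt_transposeLevel {ℓ : V → ℕ} (h3 : ∀ w, 3 ∣ ℓ w) {u v x y : V}
    (huv : ℓ v = ℓ u + 3) (hxy : ℓ x < ℓ y) (hne : (x, y) ≠ (u, v)) :
    transposeLevel ℓ u v x < transposeLevel ℓ u v y := by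
  have := h3 u; have := h3 v; have := h3 x; have := h3 y
  simp only [transposeLevel, Function.update_apply]
  split_ifs <;> subst_vars <;> first | omega | simp at hne

theorem transposeLevel_swap {ℓ : V → ℕ} {u v : V} (huv : ℓ v = ℓ u + 3) :
    transposeLevel ℓ u v v < transposeLevel ℓ u v u := by
  have hvu : v ≠ u := fun h => by simp [h] at huv
  simp [transposeLevel, hvu]

variable [Fintype V] (G : SimpleGraph V) (ι : V → ℤ)

/-- In every block of a phase, lower levels come first, so two vertices on different levels
always appear in the same order, except for a non-edge `uv` with `ℓ v = ℓ u + 3`, which gets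
one extra block where it is transposed. Reversing the tie-break `ι` makes any two vertices on
the same level appear in both orders. -/
noncomputable def phase (ℓ : V → ℕ) : List (List V) :=
  open Classical in
  sortedBy (fun v => toLex (ℓ v, ι v)) :: sortedBy (fun v => toLex (ℓ v, -ι v)) ::
    (Finset.univ.filter fun p : V × V => ℓ p.2 = ℓ p.1 + 3 ∧ ¬ G.Adj p.1 p.2).toList.map
      fun p => sortedBy fun v => toLex (transposeLevel ℓ p.1 p.2 v, ι v)

theorem mem_phase {ℓ : V → ℕ} {s : List V} :
    s ∈ phase G ι ℓ ↔ s = sortedBy (fun v => toLex (ℓ v, ι v)) ∨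
      s = sortedBy (fun v => toLex (ℓ v, -ι v)) ∨
      ∃ u v, ℓ v = ℓ u + 3 ∧ ¬ G.Adj u v ∧
        s = sortedBy fun w => toLex (transposeLevel ℓ u v w, ι w) := by
  classical
  simp [phase, eq_comm, and_assoc]

variable {G ι} {ℓ : V → ℕ} {x y : V}

theorem map_restrictPair_phase_of_adj (h3 : ∀ w, 3 ∣ ℓ w) (hxy : ℓ x < ℓ y) (hadj : G.Adj x y) :
    (phase G ι ℓ).map (restrictPair x y) = replicate (phase G ι ℓ).length [x, y] := by
  refine eq_replicate_iff.2 ⟨length_map _, forall_mem_map.2 fun s hs => ?_⟩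
  rcases (mem_phase G ι).1 hs with rfl | rfl | ⟨u, v, huv, hnadj, rfl⟩
  · exact restrictPair_sortedBy (Prod.Lex.toLex_lt_toLex.2 (Or.inl hxy))
  · exact restrictPair_sortedBy (Prod.Lex.toLex_lt_toLex.2 (Or.inl hxy))
  · have hne : (x, y) ≠ (u, v) := by
      rintro ⟨⟩
      exact hnadj hadj
    exact restrictPair_sortedBy
      (Prod.Lex.toLex_lt_toLex.2 (Or.inl (transposeLevel_lt_transposeLevel h3 huv hxy hne)))

theorem restrictPair_phase_of_ne (hι : Function.Injective ι) (hxy : x ≠ y) :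
    ∀ s ∈ phase G ι ℓ, restrictPair x y s = [x, y] ∨ restrictPair x y s = [y, x] := by
  intro s hs
  rcases (mem_phase G ι).1 hs with rfl | rfl | ⟨u, v, -, -, rfl⟩
  · exact restrictPair_sortedBy_of_injective (injective_toLex_prod ℓ hι) hxy
  · exact restrictPair_sortedBy_of_injective (injective_toLex_prod ℓ (neg_injective.comp hι)) hxy
  · exact restrictPair_sortedBy_of_injective (injective_toLex_prod _ hι) hxy

theorem pair_mem_map_restrictPair_phase (hι : Function.Injective ι) (hxy : x ≠ y)
    (hℓ : ℓ x = ℓ y ∨ ℓ y = ℓ x + 3 ∧ ¬ G.Adj x y) :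
    [x, y] ∈ (phase G ι ℓ).map (restrictPair x y) ∧
      [y, x] ∈ (phase G ι ℓ).map (restrictPair x y) := by
  have base : sortedBy (fun v => toLex (ℓ v, ι v)) ∈ phase G ι ℓ := (mem_phase G ι).2 (Or.inl rfl)
  have rev : sortedBy (fun v => toLex (ℓ v, -ι v)) ∈ phase G ι ℓ :=
    (mem_phase G ι).2 (Or.inr (Or.inl rfl))
  rcases hℓ with heq | ⟨huv, hnadj⟩
  · rcases (hι.ne hxy).lt_or_gt with h | h
    · refine ⟨mem_map.2 ⟨_, base, restrictPair_sortedBy ?_⟩,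
        mem_map.2 ⟨_, rev, restrictPair_comm y x ▸ restrictPair_sortedBy ?_⟩⟩
      · exact Prod.Lex.toLex_lt_toLex.2 (Or.inr ⟨heq, h⟩)
      · exact Prod.Lex.toLex_lt_toLex.2 (Or.inr ⟨heq.symm, neg_lt_neg h⟩)
    · refine ⟨mem_map.2 ⟨_, rev, restrictPair_sortedBy ?_⟩,
        mem_map.2 ⟨_, base, restrictPair_comm y x ▸ restrictPair_sortedBy ?_⟩⟩
      · exact Prod.Lex.toLex_lt_toLex.2 (Or.inr ⟨heq, neg_lt_neg h⟩)
      · exact Prod.Lex.toLex_lt_toLex.2 (Or.inr ⟨heq.symm, h⟩)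
  · have flip : sortedBy (fun w => toLex (transposeLevel ℓ x y w, ι w)) ∈ phase G ι ℓ :=
      (mem_phase G ι).2 (Or.inr (Or.inr ⟨x, y, huv, hnadj, rfl⟩))
    refine ⟨mem_map.2 ⟨_, base, restrictPair_sortedBy ?_⟩,
      mem_map.2 ⟨_, flip, restrictPair_comm y x ▸ restrictPair_sortedBy ?_⟩⟩
    · exact Prod.Lex.toLex_lt_toLex.2 (Or.inl (by omega))
    · exact Prod.Lex.toLex_lt_toLex.2 (Or.inl (transposeLevel_swap huv))

end Phase

section Word

variable {V : Type*} [Fintype V] [DecidableEq V] (G : SimpleGraph V) (ι : V → ℤ)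

noncomputable def phasedWord (ℓ₁ : V → ℕ) (S : Finset V) (ℓ₂ : V → ℕ) : List V :=
  (phase G ι ℓ₁ ++ [S.toList] ++ phase G ι ℓ₂).flatten

variable {G ι} {ℓ₁ ℓ₂ : V → ℕ} {S : Finset V} {x y : V}

theorem mem_phasedWord (v : V) : v ∈ phasedWord G ι ℓ₁ S ℓ₂ :=
  mem_flatten.2 ⟨_, mem_append_left _ (mem_append_left _ ((mem_phase G ι).2 (Or.inl rfl))),
    mem_sortedBy _ v⟩

theorem restrictPair_phasedWord :
    restrictPair x y (phasedWord G ι ℓ₁ S ℓ₂) =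
      ((phase G ι ℓ₁).map (restrictPair x y)).flatten ++ restrictPair x y S.toList ++
        ((phase G ι ℓ₂).map (restrictPair x y)).flatten := by
  simp only [phasedWord, restrictPair, flatten_append, flatten_cons, flatten_nil, append_nil,
    filter_append, filter_flatten]
  rfl

theorem not_alternate_phasedWord (hι : Function.Injective ι) (hxy : x ≠ y) (hadj : ¬ G.Adj x y)
    {ℓ : V → ℕ} (hℓ : ℓ = ℓ₁ ∨ ℓ = ℓ₂) (hgap : ℓ x = ℓ y ∨ ℓ y = ℓ x + 3 ∨ ℓ x = ℓ y + 3) :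
    ¬ Alternate (phasedWord G ι ℓ₁ S ℓ₂) x y := by
  have hboth : [x, y] ∈ (phase G ι ℓ).map (restrictPair x y) ∧
      [y, x] ∈ (phase G ι ℓ).map (restrictPair x y) := by
    rcases hgap with h | h | h
    · exact pair_mem_map_restrictPair_phase hι hxy (Or.inl h)
    · exact pair_mem_map_restrictPair_phase hι hxy (Or.inr ⟨h, hadj⟩)
    · rw [restrictPair_comm]
      exact (pair_mem_map_restrictPair_phase hι hxy.symm (Or.inr ⟨h, fun h' => hadj h'.symm⟩)).symm
  have hphase : ¬ ((phase G ι ℓ).map (restrictPair x y)).flatten.IsChain (· ≠ ·) :=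
    not_isChain_ne_flatten hxy (forall_mem_map.2 (restrictPair_phase_of_ne hι hxy))
      hboth.1 hboth.2
  rw [alternate_iff_isChain_restrictPair, restrictPair_phasedWord]
  refine fun h => hphase (h.infix ?_)
  rcases hℓ with rfl | rfl
  · exact ((prefix_append _ _).trans (prefix_append _ _)).isInfix
  · exact (suffix_append _ _).isInfix

theorem alternate_phasedWord_of_lt_of_lt (h3₁ : ∀ w, 3 ∣ ℓ₁ w) (h3₂ : ∀ w, 3 ∣ ℓ₂ w)
    (hadj : G.Adj x y) (h₁ : ℓ₁ x < ℓ₁ y) (h₂ : ℓ₂ x < ℓ₂ y) (hx : x ∉ S) (hy : y ∉ S) :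
    Alternate (phasedWord G ι ℓ₁ S ℓ₂) x y := by
  rw [alternate_iff_isChain_restrictPair, restrictPair_phasedWord,
    restrictPair_eq_nil (by simpa using hx) (by simpa using hy), append_nil,
    map_restrictPair_phase_of_adj h3₁ h₁ hadj, map_restrictPair_phase_of_adj h3₂ h₂ hadj]
  exact isChain_ne_flatten_replicate_append (G.ne_of_adj hadj) _ _

theorem alternate_phasedWord_of_lt_of_gt (h3₁ : ∀ w, 3 ∣ ℓ₁ w) (h3₂ : ∀ w, 3 ∣ ℓ₂ w)
    (hadj : G.Adj x y) (h₁ : ℓ₁ x < ℓ₁ y) (h₂ : ℓ₂ y < ℓ₂ x) (hx : x ∈ S) (hy : y ∉ S) :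
    Alternate (phasedWord G ι ℓ₁ S ℓ₂) x y := by
  rw [alternate_iff_isChain_restrictPair, restrictPair_phasedWord,
    restrictPair_eq_singleton S.nodup_toList (by simpa using hx) (by simpa using hy),
    map_restrictPair_phase_of_adj h3₁ h₁ hadj, restrictPair_comm x y,
    map_restrictPair_phase_of_adj h3₂ h₂ hadj.symm]
  exact isChain_ne_flatten_replicate_append_cons (G.ne_of_adj hadj) _ _

end Word

section Coloring

variable {V : Type*} [Fintype V] [DecidableEq V] {G : SimpleGraph V} (ι : V → ℤ)
  (χ : G.Coloring (Fin 3))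

noncomputable def coloringWord : List V :=
  phasedWord G ι (fun v => ![3, 0, 6] (χ v)) (Finset.univ.filter fun v => χ v = 1)
    (fun v => ![0, 6, 3] (χ v))

variable {ι χ} {x y : V}

theorem alternate_coloringWord_of_adj (hadj : G.Adj x y) : Alternate (coloringWord ι χ) x y := by
  have h3₁ : ∀ v, 3 ∣ ![3, 0, 6] (χ v) := fun v => by generalize χ v = c; revert c; decide
  have h3₂ : ∀ v, 3 ∣ ![0, 6, 3] (χ v) := fun v => by generalize χ v = c; revert c; decide
  suffices key : ∀ {u v}, G.Adj u v → χ u = 1 ∨ χ u = 0 ∧ χ v = 2 →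
      Alternate (coloringWord ι χ) u v by
    have hcol : (χ x = 1 ∨ χ x = 0 ∧ χ y = 2) ∨ (χ y = 1 ∨ χ y = 0 ∧ χ x = 2) := by
      have := χ.valid hadj
      generalize χ x = c, χ y = d at this ⊢
      revert c d; decide
    rcases hcol with h | h
    · exact key hadj h
    · exact alternate_comm.1 (key hadj.symm h)
  intro u v huv hcol
  have hc : χ u ≠ χ v := χ.valid huv
  rcases hcol with hu | ⟨hu, hv⟩
  · have hv : χ v ≠ 1 := hu ▸ hc.symm
    refine alternate_phasedWord_of_lt_of_gt h3₁ h3₂ huv ?_ ?_ (by simp [hu]) (by simp [hv])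
    all_goals rw [hu]; generalize χ v = d at hv; revert d; decide
  · refine alternate_phasedWord_of_lt_of_lt h3₁ h3₂ huv ?_ ?_ (by simp [hu]) (by simp [hv])
    all_goals rw [hu, hv]; decide

theorem not_alternate_coloringWord_of_not_adj (hι : Function.Injective ι) (hxy : x ≠ y)
    (hadj : ¬ G.Adj x y) : ¬ Alternate (coloringWord ι χ) x y := by
  by_cases h12 : χ x = 1 ∧ χ y = 2 ∨ χ x = 2 ∧ χ y = 1
  · refine not_alternate_phasedWord hι hxy hadj (Or.inr rfl) ?_
    rcases h12 with ⟨hx, hy⟩ | ⟨hx, hy⟩ <;> simp [hx, hy]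
  · refine not_alternate_phasedWord hι hxy hadj (Or.inl rfl) ?_
    generalize χ x = c, χ y = d at h12 ⊢
    revert c d; decide

end Coloring

end WordRepresentation

open WordRepresentation

/-- Every 3-colorable finite simple graph is word-representable. -/
theorem wordRepresentable_of_colorable_three {V : Type*} [Fintype V] [DecidableEq V]
    (G : SimpleGraph V) (h : G.Colorable 3) :
    WordRepresentable G := by
  obtain ⟨χ⟩ := h
  let ι : V → ℤ := fun v => (Fintype.equivFin V v : ℕ)
  have hι : Function.Injective ι :=
    (Nat.cast_injective.comp Fin.val_injective).comp (Fintype.equivFin V).injective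
  refine ⟨coloringWord ι χ, mem_phasedWord, fun x y hxy => ⟨alternate_coloringWord_of_adj, ?_⟩⟩
  exact fun halt => by_contra fun hadj => not_alternate_coloringWord_of_not_adj hι hxy hadj halt
end

section
/- For every k ≥ 3, the simplified de Bruijn graph S(2,k) is not word-representable. -/
/-!
Two distinct letters `x`, `y` alternate in a word exactly when the difference between their
numbers of occurrences in the prefixes of the word stays in a window `[c, c + 1]`. Fixing `x` and
normalising these differences, every neighbour `y` of `x` gets a `{0, 1}`-valued sequence `h y`,
and two neighbours of `x` alternate iff `h y ≤ h z` or `h z ≤ h y` pointwise. So the neighbourhood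
of every vertex of a word-representable graph is a comparability graph, and cannot contain a
chordless 5-cycle, because an odd cycle cannot be oriented with all its vertices sources or sinks.
In `S(2,k)` the vertex `01` is adjacent to all vertices of the chordless 5-cycle
`00, 10, 11, 12, 20`.
-/

open Relation

theorem Relation.SymmGen.chord_of_five_cycle {α : Type*} [Preorder α] {a b c d e : α}
    (hab : SymmGen (· ≤ ·) a b) (hbc : SymmGen (· ≤ ·) b c) (hcd : SymmGen (· ≤ ·) c d)
    (hde : SymmGen (· ≤ ·) d e) (hea : SymmGen (· ≤ ·) e a) :
    SymmGen (· ≤ ·) a c ∨ SymmGen (· ≤ ·) b d ∨ SymmGen (· ≤ ·) c e ∨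
      SymmGen (· ≤ ·) d a ∨ SymmGen (· ≤ ·) e b := by
  rcases hab with hab | hab <;> rcases hbc with hbc | hbc <;> rcases hcd with hcd | hcd <;>
    rcases hde with hde | hde <;> rcases hea with hea | hea <;>
    first
    | exact .inl (.of_le (hab.trans hbc)) | exact .inl (.of_ge (hbc.trans hab))
    | exact .inr (.inl (.of_le (hbc.trans hcd))) | exact .inr (.inl (.of_ge (hcd.trans hbc)))
    | exact .inr (.inr (.inl (.of_le (hcd.trans hde))))
    | exact .inr (.inr (.inl (.of_ge (hde.trans hcd))))
    | exact .inr (.inr (.inr (.inl (.of_le (hde.trans hea)))))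
    | exact .inr (.inr (.inr (.inl (.of_ge (hea.trans hde)))))
    | exact .inr (.inr (.inr (.inr (.of_le (hea.trans hab)))))
    | exact .inr (.inr (.inr (.inr (.of_ge (hab.trans hea)))))

section Lists

variable {V : Type*}

lemma List.forall_take_cons_iff {P : List V → Prop} (h0 : P []) (a : V) (w : List V) :
    (∀ i, P ((a :: w).take i)) ↔ ∀ i, P (a :: w.take i) :=
  ⟨fun h i => h (i + 1), fun h i => by cases i <;> simp_all⟩

lemma List.isChain_ne_iff_cons_or_cons {x y : V} (hxy : x ≠ y) {l : List V}
    (hl : ∀ z ∈ l, z = x ∨ z = y) :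
    l.IsChain (· ≠ ·) ↔ (x :: l).IsChain (· ≠ ·) ∨ (y :: l).IsChain (· ≠ ·) := by
  refine ⟨fun h => ?_, fun h => h.elim List.IsChain.tail List.IsChain.tail⟩
  cases l with
  | nil => exact Or.inl (List.isChain_singleton x)
  | cons a l =>
    rcases hl a List.mem_cons_self with rfl | rfl
    · exact Or.inr (List.isChain_cons_cons.2 ⟨hxy.symm, h⟩)
    · exact Or.inl (List.isChain_cons_cons.2 ⟨hxy, h⟩)

variable [DecidableEq V]

lemma List.filter_pair_comm (w : List V) (x y : V) :
    w.filter (fun z => decide (z = x ∨ z = y)) = w.filter (fun z => decide (z = y ∨ z = x)) :=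
  List.filter_congr fun z _ => by simp only [or_comm]

lemma List.isChain_cons_filter_pair_iff {x y : V} (hxy : x ≠ y) (w : List V) :
    (x :: w.filter (fun z => decide (z = x ∨ z = y))).IsChain (· ≠ ·) ↔
      ∀ i, (w.take i).count x ≤ (w.take i).count y ∧
        (w.take i).count y ≤ (w.take i).count x + 1 := by
  induction w generalizing x y with
  | nil => simp
  | cons a w ih =>
    rw [List.forall_take_cons_iff
      (P := fun p => p.count x ≤ p.count y ∧ p.count y ≤ p.count x + 1) (by simp)]
    by_cases hax : a = x
    · subst hax
      rw [List.filter_cons_of_pos (by simp), List.isChain_cons_cons]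
      simp only [ne_eq, not_true_eq_false, false_and, false_iff, not_forall]
      exact ⟨0, by simp [hxy.symm]⟩
    by_cases hay : a = y
    · subst hay
      rw [List.filter_cons_of_pos (by simp), List.isChain_cons_cons, List.filter_pair_comm,
        ih hxy.symm]
      simp [hxy, hxy.symm, and_comm]
    · rw [List.filter_cons_of_neg (by simp [hax, hay]), ih hxy]
      simp [hax, hay]

end Lists

section WordRepresentable

variable {V : Type*} [DecidableEq V]

theorem alternate_iff_exists_count_window {w : List V} {x y : V} (hxy : x ≠ y) :
    Alternate w x y ↔ ∃ c : ℤ, ∀ i,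
      c ≤ ((w.take i).count x : ℤ) - (w.take i).count y ∧
        ((w.take i).count x : ℤ) - (w.take i).count y ≤ c + 1 := by
  have hl : ∀ z ∈ w.filter (fun z => decide (z = x ∨ z = y)), z = x ∨ z = y := fun z hz => by
    simpa using (List.mem_filter.1 hz).2
  rw [Alternate, List.Chain', List.isChain_ne_iff_cons_or_cons hxy hl,
    List.isChain_cons_filter_pair_iff hxy, List.filter_pair_comm,
    List.isChain_cons_filter_pair_iff hxy.symm]
  constructor
  · rintro (h | h)
    · exact ⟨-1, fun i => by have := h i; omega⟩
    · exact ⟨0, fun i => by have := h i; omega⟩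
  · rintro ⟨c, hc⟩
    have hc0 := hc 0
    simp only [List.take_zero, List.count_nil, CharP.cast_eq_zero, sub_self] at hc0
    obtain rfl | rfl : c = -1 ∨ c = 0 := by omega
    · exact Or.inl fun i => by have := hc i; omega
    · exact Or.inr fun i => by have := hc i; omega

theorem WordRepresentable.exists_comparability_neighborhood {G : SimpleGraph V}
    (hG : WordRepresentable G) (x : V) :
    ∃ h : V → ℕ → ℤ, ∀ y z, G.Adj x y → G.Adj x z → y ≠ z →
      (G.Adj y z ↔ SymmGen (· ≤ ·) (h y) (h z)) := by
  obtain ⟨w, -, hw⟩ := hG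
  have hwin : ∀ y, G.Adj x y → ∃ c : ℤ, ∀ i,
      c ≤ ((w.take i).count x : ℤ) - (w.take i).count y ∧
        ((w.take i).count x : ℤ) - (w.take i).count y ≤ c + 1 :=
    fun y hxy => (alternate_iff_exists_count_window hxy.ne).1 ((hw x y hxy.ne).1 hxy)
  choose! c hc using hwin
  obtain ⟨h, hh⟩ : ∃ h : V → ℕ → ℤ, ∀ y i,
      h y i = ((w.take i).count x : ℤ) - (w.take i).count y - c y := ⟨_, fun _ _ => rfl⟩
  refine ⟨h, fun y z hy hz hyz => ?_⟩
  have hbounds : ∀ i, (0 ≤ h y i ∧ h y i ≤ 1) ∧ (0 ≤ h z i ∧ h z i ≤ 1) ∧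
      ((w.take i).count y : ℤ) - (w.take i).count z = h z i - h y i + (c z - c y) := fun i => by
    have := hc y hy i; have := hc z hz i; have := hh y i; have := hh z i
    omega
  rw [hw y z hyz, alternate_iff_exists_count_window hyz]
  constructor
  · rintro ⟨d, hd⟩
    by_contra hcmp
    simp only [SymmGen, Pi.le_def, not_or, not_forall, not_le] at hcmp
    obtain ⟨⟨i, hi⟩, ⟨j, hj⟩⟩ := hcmp
    have := hd i; have := hd j; have := hbounds i; have := hbounds j
    omega
  · rintro (hle | hle)
    · exact ⟨c z - c y, fun i => by have : h y i ≤ h z i := hle i; have := hbounds i; omega⟩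
    · exact ⟨c z - c y - 1, fun i => by have : h z i ≤ h y i := hle i; have := hbounds i; omega⟩

theorem WordRepresentable.chord_of_five_cycle_in_neighborhood {G : SimpleGraph V}
    (hG : WordRepresentable G) {x a b c d e : V}
    (hxa : G.Adj x a) (hxb : G.Adj x b) (hxc : G.Adj x c) (hxd : G.Adj x d) (hxe : G.Adj x e)
    (hab : G.Adj a b) (hbc : G.Adj b c) (hcd : G.Adj c d) (hde : G.Adj d e) (hea : G.Adj e a)
    (hac : a ≠ c) (hbd : b ≠ d) (hce : c ≠ e) (hda : d ≠ a) (heb : e ≠ b) :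
    G.Adj a c ∨ G.Adj b d ∨ G.Adj c e ∨ G.Adj d a ∨ G.Adj e b := by
  obtain ⟨h, hh⟩ := hG.exists_comparability_neighborhood x
  rw [hh a c hxa hxc hac, hh b d hxb hxd hbd, hh c e hxc hxe hce, hh d a hxd hxa hda,
    hh e b hxe hxb heb]
  exact SymmGen.chord_of_five_cycle ((hh a b hxa hxb hab.ne).1 hab)
    ((hh b c hxb hxc hbc.ne).1 hbc) ((hh c d hxc hxd hcd.ne).1 hcd)
    ((hh d e hxd hxe hde.ne).1 hde) ((hh e a hxe hxa hea.ne).1 hea)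

end WordRepresentable

lemma simplifiedDeBruijn_two_adj_iff {k : ℕ} {u v : Fin 2 → Fin k} :
    (simplifiedDeBruijn 2 k).Adj u v ↔ u ≠ v ∧ (v 0 = u 1 ∨ u 0 = v 1) := by
  have shift : ∀ u v : Fin 2 → Fin k, debruijnShift 2 k u v ↔ v 0 = u 1 := fun u v =>
    ⟨fun h => h 0 one_lt_two, fun h i hi => by obtain rfl : i = 0 := (by omega); exact h⟩
  rw [simplifiedDeBruijn, SimpleGraph.fromRel_adj, shift, shift]

/-- For every `k ≥ 3`, the simplified de Bruijn graph `S(2,k)` is not word-representable. -/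
theorem simplifiedDeBruijn_two_k_not_wordRepresentable (k : ℕ) (hk : 3 ≤ k) :
    ¬ WordRepresentable (simplifiedDeBruijn 2 k) := by
  intro hG
  let p : Fin k := ⟨0, by omega⟩
  let q : Fin k := ⟨1, by omega⟩
  let r : Fin k := ⟨2, by omega⟩
  have := hG.chord_of_five_cycle_in_neighborhood (x := ![p, q]) (a := ![p, p]) (b := ![q, p])
    (c := ![q, q]) (d := ![q, r]) (e := ![r, p])
  simp [simplifiedDeBruijn_two_adj_iff, funext_iff, Fin.forall_fin_two, Fin.ext_iff, p, q, r]
    at this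
end

section
/- The wheel graph W5, obtained from the cycle graph C5 on five vertices by adding one new vertex adjacent to all five cycle vertices, is not word-representable. -/
/-- The wheel graph `W₅` on six vertices: vertices `0,…,4` form a 5-cycle and
vertex `5` (the hub) is adjacent to all of them. -/
def wheel5 : SimpleGraph (Fin 6) :=
  SimpleGraph.fromRel
    (fun i j => (i = 5 ∧ j ≠ 5) ∨
      ((i : ℕ) < 5 ∧ (j : ℕ) < 5 ∧ (j : ℕ) = ((i : ℕ) + 1) % 5))

/-!
Order the vertices by their first occurrence in a word `w` representing `G`. For `x` before `y`,
the letters alternate exactly when every prefix of `w` contains as many `x`'s as `y`'s or one more.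
Along a path `x₀ x₁ ⋯ x_k` increasing in this order the prefix counts therefore decrease, and if
`x₀ x_k` is an edge they all stay within one of each other, so every pair `x_i x_j` alternates and
is an edge: the order has no shortcut, i.e. it is a semi-transitive orientation of `G`. A finite
check shows that every ordering of the six vertices of `W₅` has a shortcut on four vertices.
-/

open List

section Alternation

variable {V : Type*} [DecidableEq V]

def PrefixBalanced (w : List V) (x y : V) : Prop :=
  ∀ v, v <+: w → count y v ≤ count x v ∧ count x v ≤ count y v + 1

theorem prefixBalanced_cons_self {x y : V} (hxy : x ≠ y) {t : List V} :
    PrefixBalanced (x :: t) x y ↔ PrefixBalanced t y x := by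
  simp only [PrefixBalanced, prefix_cons_iff, forall_eq_or_imp, count_nil, le_refl, zero_le,
    and_self, true_and, forall_exists_index, and_imp]
  constructor
  · intro h v hv
    have := h (x :: v) v rfl hv
    simp only [count_cons_self, count_cons_of_ne hxy] at this
    omega
  · rintro h _ v rfl hv
    have := h v hv
    simp only [count_cons_self, count_cons_of_ne hxy]
    omega

theorem isChain_ne_and_head?_iff_prefixBalanced {x y : V} (hxy : x ≠ y) {u : List V}
    (hu : ∀ a ∈ u, a = x ∨ a = y) :
    (u.IsChain (· ≠ ·) ∧ ∀ a ∈ u.head?, a = x) ↔ PrefixBalanced u x y := by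
  induction u generalizing x y with
  | nil => simp [PrefixBalanced]
  | cons a t ih =>
    rcases hu a mem_cons_self with rfl | rfl
    · have ht : ∀ b ∈ t, b = y ∨ b = a := fun b hb => (hu b (mem_cons_of_mem a hb)).symm
      have hhead : ∀ b ∈ t.head?, (a ≠ b ↔ b = y) := fun b hb => by
        rcases ht b (mem_of_mem_head? hb) with rfl | rfl <;> simp [hxy]
      rw [prefixBalanced_cons_self hxy, ← ih hxy.symm ht, isChain_cons,
        forall₂_congr hhead]
      simp [and_comm]
    · refine iff_of_false (by simp [hxy.symm]) fun h => ?_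
      simpa [hxy] using h [a] ⟨t, rfl⟩

theorem prefixBalanced_filter_iff {p : V → Bool} {x y : V} (hx : p x) (hy : p y) {w : List V} :
    PrefixBalanced (w.filter p) x y ↔ PrefixBalanced w x y := by
  constructor
  · intro h v hv
    simpa [count_filter hx, count_filter hy] using h _ (hv.filter p)
  · intro h v hv
    obtain ⟨u, hu, rfl⟩ := prefix_filter_iff.1 hv
    simpa [count_filter hx, count_filter hy] using h u hu

theorem head?_filter_eq_some_of_idxOf_lt {x y : V} {w : List V} (hx : x ∈ w)
    (hlt : w.idxOf x < w.idxOf y) :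
    (w.filter fun z => decide (z = x ∨ z = y)).head? = some x := by
  induction w with
  | nil => simp at hx
  | cons a w ih =>
    by_cases hax : a = x
    · simp [hax]
    have hay : a ≠ y := by
      rintro rfl
      simp at hlt
    rw [idxOf_cons_ne w hax, idxOf_cons_ne w hay] at hlt
    simpa [hax, hay] using
      ih ((mem_cons.1 hx).resolve_left (Ne.symm hax)) (Nat.lt_of_succ_lt_succ hlt)

theorem alternate_iff_prefixBalanced {x y : V} (hxy : x ≠ y) {w : List V} (hx : x ∈ w)
    (hlt : w.idxOf x < w.idxOf y) : Alternate w x y ↔ PrefixBalanced w x y := by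
  rw [← prefixBalanced_filter_iff (p := fun z => decide (z = x ∨ z = y)) (by simp) (by simp),
    ← isChain_ne_and_head?_iff_prefixBalanced hxy (fun a ha => by simpa using (mem_filter.1 ha).2),
    head?_filter_eq_some_of_idxOf_lt hx hlt]
  simp only [Option.mem_def, Option.some.injEq, forall_eq', and_true]
  rfl

theorem pairwise_prefixBalanced_of_isChain {w : List V} {a : V} {t : List V}
    (hchain : (a :: t).IsChain (PrefixBalanced w))
    (hends : PrefixBalanced w a ((a :: t).getLast (cons_ne_nil a t))) :
    (a :: t).Pairwise (PrefixBalanced w) := by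
  refine pairwise_of_forall_sublist fun {x y} hxy v hv => ?_
  set c : V → ℕ := fun z => count z v
  have hanti : (a :: t).Pairwise fun p q => c q ≤ c p := by
    have : ((a :: t).map c).IsChain (· ≥ ·) :=
      (isChain_map c).2 (hchain.imp fun _ _ h => (h v hv).1)
    exact pairwise_map.1 this.pairwise
  have hxa : c x ≤ c a := hanti.rel_head_of_rel_head_head (hxy.subset (by simp)) le_rfl
  have hby : c ((a :: t).getLast (cons_ne_nil a t)) ≤ c y :=
    hanti.rel_getLast_of_rel_getLast_getLast (hxy.subset (by simp)) le_rfl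
  have hyx : c y ≤ c x := hanti.forall_sublist hxy
  have hab : c a ≤ c ((a :: t).getLast (cons_ne_nil a t)) + 1 := (hends v hv).2
  exact ⟨hyx, show c x ≤ c y + 1 by omega⟩

end Alternation

section Shortcut

variable {V : Type*}

def IsShortcut (G : SimpleGraph V) (s : List V) : Prop :=
  s.IsChain G.Adj ∧ (∀ a ∈ s.head?, ∀ b ∈ s.getLast?, G.Adj a b) ∧ ¬ s.Pairwise G.Adj

instance (G : SimpleGraph V) [DecidableRel G.Adj] : DecidablePred (IsShortcut G) :=
  fun _ => inferInstanceAs (Decidable (_ ∧ _ ∧ _))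

theorem not_isShortcut_of_pairwise_idxOf_lt [DecidableEq V] {G : SimpleGraph V} {w : List V}
    (hw : ∀ x y, x ≠ y → (G.Adj x y ↔ Alternate w x y)) {s : List V} (hsw : ∀ x ∈ s, x ∈ w)
    (hs : s.Pairwise fun x y => w.idxOf x < w.idxOf y) : ¬ IsShortcut G s := by
  rintro ⟨hchain, hends, hnot⟩
  have hadj : ∀ {x y}, [x, y] <+ s → (G.Adj x y ↔ PrefixBalanced w x y) := fun {x y} hxy => by
    have hlt := hs.forall_sublist hxy
    have hne : x ≠ y := fun h => hlt.ne (congrArg w.idxOf h)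
    exact (hw x y hne).trans (alternate_iff_prefixBalanced hne (hsw x (hxy.subset (by simp))) hlt)
  rcases s with _ | ⟨a, t⟩
  · exact hnot Pairwise.nil
  set b := (a :: t).getLast (cons_ne_nil a t)
  have hab : G.Adj a b := hends a rfl b (getLast?_eq_some_getLast _)
  have hsub : [a, b] <+ a :: t := by
    have : b ∈ t := (mem_cons.1 (getLast_mem _)).resolve_left hab.ne'
    simpa using this
  refine hnot (pairwise_of_forall_sublist fun hxy => (hadj hxy).2 ?_)
  refine (pairwise_prefixBalanced_of_isChain ?_ ((hadj hsub).1 hab)).forall_sublist hxy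
  rw [isChain_iff_forall_rel_of_append_cons_cons] at hchain ⊢
  intro x y l₁ l₂ h
  exact (hadj (h ▸ by simp)).1 (hchain h)

theorem pairwise_idxOf_lt_mergeSort [DecidableEq V] {w l : List V} (hl : l.Nodup)
    (hlw : ∀ x ∈ l, x ∈ w) :
    (l.mergeSort fun x y => w.idxOf x ≤ w.idxOf y).Pairwise fun x y => w.idxOf x < w.idxOf y := by
  have hperm := mergeSort_perm l fun x y => w.idxOf x ≤ w.idxOf y
  have hsorted := pairwise_mergeSort (le := fun x y => w.idxOf x ≤ w.idxOf y)
    (fun _ _ _ h₁ h₂ => by simp only [decide_eq_true_eq] at *; omega) (fun _ _ => by simp; omega) l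
  refine (hsorted.and (hperm.nodup_iff.2 hl)).imp_of_mem fun hx _ ⟨hle, hne⟩ => ?_
  exact lt_of_le_of_ne (by simpa using hle)
    fun h => hne ((idxOf_inj (hlw _ (hperm.subset hx))).1 h)

end Shortcut

instance : DecidableRel wheel5.Adj :=
  inferInstanceAs (DecidableRel (SimpleGraph.fromRel _).Adj)

theorem wheel5_exists_shortcut_sublist {l : List (Fin 6)} (hl : l ~ finRange 6) :
    ∃ s, s <+ l ∧ IsShortcut wheel5 s := by
  -- `permutations'` rather than `permutations`, which is defined by well-founded recursion and
  -- does not reduce in the kernel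
  have key : ∀ l ∈ (finRange 6).permutations', ∃ s ∈ l.sublistsLen 4, IsShortcut wheel5 s := by
    decide +kernel
  obtain ⟨s, hs, hshort⟩ := key l (mem_permutations'.2 hl)
  exact ⟨s, (mem_sublistsLen.1 hs).1, hshort⟩

/-- The wheel graph `W₅` is not word-representable. -/
theorem wheel5_not_wordRepresentable : ¬ WordRepresentable wheel5 := by
  rintro ⟨w, hw_mem, hw⟩
  let order := (finRange 6).mergeSort fun x y => w.idxOf x ≤ w.idxOf y
  obtain ⟨s, hs, hshort⟩ := wheel5_exists_shortcut_sublist (mergeSort_perm _ _ : order ~ finRange 6)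
  exact not_isShortcut_of_pairwise_idxOf_lt hw (fun x _ => hw_mem x)
    ((pairwise_idxOf_lt_mergeSort (nodup_finRange 6) fun x _ => hw_mem x).sublist hs) hshort
end

section
/- Suppose an undirected graph G has a cycle C = x1 x2 ... xm x1 with m ≥ 4 whose vertex set {x1, ..., xm} does not induce a clique in G. If G is oriented semi-transitively and m−2 of the edges of C are oriented in the same direction around the cycle (i.e., from xi to x_{i+1}, indices modulo m, or all from x_{i+1} to xi), then the remaining two edges of C are oriented in the opposite direction around the cycle. -/
/-! Semi-transitivity forces a directed path whose end points are adjacent to be transitively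
closed, hence to span a clique. If all edges of the cycle but the one leaving `j` pointed
forward, the path `x (j + 1) → ⋯ → x j` around the cycle would be such a path, contradicting
that the cycle does not span a clique; reversing every arc handles the backward case. -/

section SemiTransitive

variable {V : Type*} {G : SimpleGraph V} {rel : V → V → Prop}

theorem IsOrientation.swap (hor : IsOrientation G rel) : IsOrientation G (Function.swap rel) :=
  ⟨fun x y h => (hor.1 y x h).symm, fun x y hadj => by
    have := hor.2 y x hadj.symm
    simp only [Function.swap]
    tauto⟩

theorem IsSemiTransitive.swap (hst : IsSemiTransitive G rel) :
    IsSemiTransitive G (Function.swap rel) := by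
  refine ⟨fun v hv => hst.1 v (Relation.transGen_swap.mp hv), fun k q hq => ?_⟩
  have hpath : ∀ i : Fin k, rel (q i.castSucc.rev) (q i.succ.rev) := by
    intro i
    simpa only [Fin.rev_castSucc, Fin.rev_succ] using hq i.rev
  rcases hst.2 k (fun t => q t.rev) hpath with h | h
  · left
    simp only [Fin.rev_zero, Fin.rev_last] at h
    exact fun hadj => h hadj.symm
  · right
    intro a b hab
    simpa only [Fin.rev_rev] using h b.rev a.rev (Fin.rev_lt_rev.mpr hab)

theorem IsSemiTransitive.adj_of_path_of_adj_ends (hor : IsOrientation G rel)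
    (hst : IsSemiTransitive G rel) {k : ℕ} {p : Fin (k + 1) → V}
    (hpath : ∀ i : Fin k, rel (p i.castSucc) (p i.succ)) (hends : G.Adj (p 0) (p (Fin.last k)))
    {a b : Fin (k + 1)} (hab : a ≠ b) : G.Adj (p a) (p b) := by
  rcases hst.2 k p hpath with h | h
  · exact absurd hends h
  · rcases hab.lt_or_gt with hlt | hlt
    · exact hor.1 _ _ (h a b hlt)
    · exact (hor.1 _ _ (h b a hlt)).symm

section Cycle

variable {n : ℕ} {x : Fin (n + 1) → V}

theorem IsSemiTransitive.adj_of_forward_except (hor : IsOrientation G rel)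
    (hst : IsSemiTransitive G rel) {j : Fin (n + 1)} (hj : G.Adj (x j) (x (j + 1)))
    (hfwd : ∀ l, l ≠ j → rel (x l) (x (l + 1))) {a b : Fin (n + 1)} (hab : a ≠ b) :
    G.Adj (x a) (x b) := by
  set p : Fin (n + 1) → V := fun t => x (j + 1 + t)
  have hpath : ∀ t : Fin n, rel (p t.castSucc) (p t.succ) := by
    intro t
    have hne : j + 1 + t.castSucc ≠ j := by
      rw [add_assoc, add_comm 1, Fin.coeSucc_eq_succ]
      exact fun h => Fin.succ_ne_zero t (add_eq_left.mp h)
    simpa only [p, add_assoc, add_comm 1, Fin.coeSucc_eq_succ] using hfwd _ hne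
  have hends : G.Adj (p 0) (p (Fin.last n)) := by
    have hlast : j + 1 + Fin.last n = j := by
      rw [add_assoc, add_comm 1, Fin.last_add_one, add_zero]
    simpa only [p, add_zero, hlast] using hj.symm
  have hrot : ∀ c, p (c - (j + 1)) = x c := fun c => congrArg x (add_sub_cancel _ c)
  rw [← hrot a, ← hrot b]
  exact hst.adj_of_path_of_adj_ends hor hpath hends (by simpa only [ne_eq, sub_left_inj])

theorem IsSemiTransitive.rel_back_of_forward_except_two (hor : IsOrientation G rel)
    (hst : IsSemiTransitive G rel) (hcyc : ∀ i, G.Adj (x i) (x (i + 1)))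
    (hnotclique : ¬ ∀ a b, a ≠ b → G.Adj (x a) (x b)) (i j : Fin (n + 1))
    (hfwd : ∀ l, l ≠ i → l ≠ j → rel (x l) (x (l + 1))) : rel (x (i + 1)) (x i) := by
  refine (hor.2 _ _ (hcyc i).symm).mpr fun hi => hnotclique fun a b => ?_
  refine hst.adj_of_forward_except hor (hcyc j) fun l hlj => ?_
  by_cases hli : l = i
  · exact hli ▸ hi
  · exact hfwd l hli hlj

end Cycle

end SemiTransitive

theorem semiTransitive_cycle_lemma_general {V : Type*} (G : SimpleGraph V) (rel : V → V → Prop)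
    (hor : IsOrientation G rel) (hst : IsSemiTransitive G rel)
    (m : ℕ) (x : Fin m → V)
    (nxt : Fin m → Fin m) (hnxt : ∀ i : Fin m, (nxt i : ℕ) = ((i : ℕ) + 1) % m)
    (hcyc : ∀ i : Fin m, G.Adj (x i) (x (nxt i)))
    (hnotclique : ¬ ∀ i j : Fin m, i ≠ j → G.Adj (x i) (x j))
    (i j : Fin m) :
    ((∀ l : Fin m, l ≠ i → l ≠ j → rel (x l) (x (nxt l))) →
      rel (x (nxt i)) (x i) ∧ rel (x (nxt j)) (x j)) ∧
    ((∀ l : Fin m, l ≠ i → l ≠ j → rel (x (nxt l)) (x l)) →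
      rel (x i) (x (nxt i)) ∧ rel (x j) (x (nxt j))) := by
  obtain ⟨n, rfl⟩ := Nat.exists_eq_add_one_of_ne_zero i.pos.ne'
  obtain rfl : nxt = (· + 1) := funext fun l => Fin.ext <| by simp [hnxt, Fin.val_add]
  have back := hst.rel_back_of_forward_except_two hor hcyc hnotclique
  have fwd := hst.swap.rel_back_of_forward_except_two hor.swap hcyc hnotclique
  exact ⟨fun h => ⟨back i j h, back j i fun l hlj hli => h l hli hlj⟩,
    fun h => ⟨fwd i j h, fwd j i fun l hlj hli => h l hli hlj⟩⟩

/-- Suppose a graph `G` is oriented semi-transitively by `rel`, and `x 0, x 1, …, x (m-1)`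
(`m ≥ 4`) is a cycle in `G` whose vertex set does not induce a clique, where `nxt` is the
cyclic successor of indices. If the `m - 2` edges of the cycle other than the ones leaving
`i` and `j` are all oriented forward around the cycle (respectively, all backward), then
the remaining two edges are oriented in the opposite direction. -/
theorem semiTransitive_cycle_lemma {V : Type*} (G : SimpleGraph V) (rel : V → V → Prop)
    (hor : IsOrientation G rel) (hst : IsSemiTransitive G rel)
    (m : ℕ) (hm : 4 ≤ m) (x : Fin m → V) (hinj : Function.Injective x)
    (nxt : Fin m → Fin m) (hnxt : ∀ i : Fin m, (nxt i : ℕ) = ((i : ℕ) + 1) % m)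
    (hcyc : ∀ i : Fin m, G.Adj (x i) (x (nxt i)))
    (hnotclique : ¬ ∀ i j : Fin m, i ≠ j → G.Adj (x i) (x j))
    (i j : Fin m) (hij : i ≠ j) :
    ((∀ l : Fin m, l ≠ i → l ≠ j → rel (x l) (x (nxt l))) →
      rel (x (nxt i)) (x i) ∧ rel (x (nxt j)) (x j)) ∧
    ((∀ l : Fin m, l ≠ i → l ≠ j → rel (x (nxt l)) (x l)) →
      rel (x i) (x (nxt i)) ∧ rel (x j) (x (nxt j))) :=
  semiTransitive_cycle_lemma_general G rel hor hst m x nxt hnxt hcyc hnotclique i j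
end

section
/- If a finite simple graph G is word-representable and u is an arbitrary vertex of G, then there exists a semi-transitive orientation of G in which u is a source (i.e., all edges incident to u are oriented away from u). -/
/-!
Orient each edge `xy` of `G` from the letter that comes first in a representing word `w`. In terms
of prefixes, `x → y` says `count y p ≤ count x p ≤ count y p + 1` for every prefix `p` of `w`.
Prefix counts thus decrease weakly along directed paths, which excludes cycles; and when the ends
of a directed path are adjacent they differ by at most one in every prefix, so that all vertices of
the path alternate pairwise: the orientation is semi-transitive. To make `u` a source, first make
all letters equally frequent, by repeatedly appending the least frequent letters in the order of
their last occurrences. Cyclic rotations of such a word preserve alternation, and rotating it to an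
occurrence of `u` yields a representing word that starts with `u`.
-/

open List

lemma List.IsPrefix.prefix_or_eq_append {α : Type*} {l₁ l₂ l₃ : List α}
    (h : l₁ <+: l₂ ++ l₃) : l₁ <+: l₂ ∨ ∃ t, t <+: l₃ ∧ l₁ = l₂ ++ t := by
  obtain ⟨r, hr⟩ := h
  rcases append_eq_append_iff.1 hr with ⟨a, rfl, -⟩ | ⟨c, rfl, rfl⟩
  · exact Or.inl (prefix_append l₁ a)
  · exact Or.inr ⟨c, prefix_append c r, rfl⟩

lemma List.Nodup.mem_of_prefix_of_pair_sublist {α : Type*} {s t : List α} {x y : α}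
    (hs : s.Nodup) (hxy : [x, y] <+ s) (ht : t <+: s) (hy : y ∈ t) : x ∈ t := by
  obtain ⟨r, rfl⟩ := ht
  obtain ⟨l₁, l₂, hl, h₁, h₂⟩ := sublist_append_iff.1 hxy
  rcases l₁ with _ | ⟨a, l₁⟩
  · rw [nil_append] at hl
    exact absurd (h₂.subset (by simp [← hl])) (disjoint_of_nodup_append hs hy)
  · rw [cons_append] at hl
    obtain rfl := (cons.inj hl).1
    exact h₁.subset mem_cons_self

section Alternation

variable {V : Type*} [DecidableEq V] {w t P Q : List V} {x y z : V}

/-- After deleting all letters other than `x` and `y`, the word `w` reads `x y x y ⋯`. -/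
def AlternatesFrom (w : List V) (x y : V) : Prop :=
  ∀ p, p <+: w → count y p ≤ count x p ∧ count x p ≤ count y p + 1

lemma alternatesFrom_nil : AlternatesFrom [] x y := by
  intro p hp
  simp [prefix_nil.1 hp]

lemma alternatesFrom_cons_of_ne (hx : z ≠ x) (hy : z ≠ y) :
    AlternatesFrom (z :: t) x y ↔ AlternatesFrom t x y := by
  simp only [AlternatesFrom, prefix_cons_iff]
  constructor
  · intro h p hp
    simpa [count_cons, hx, hy] using h (z :: p) (Or.inr ⟨p, rfl, hp⟩)
  · rintro h p (rfl | ⟨p, rfl, hp⟩)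
    · simp
    · simpa [count_cons, hx, hy] using h p hp

lemma alternatesFrom_cons_self (hxy : x ≠ y) :
    AlternatesFrom (x :: t) x y ↔ AlternatesFrom t y x := by
  simp only [AlternatesFrom, prefix_cons_iff]
  constructor
  · intro h p hp
    have := h (x :: p) (Or.inr ⟨p, rfl, hp⟩)
    simp only [count_cons_self, count_cons_of_ne hxy] at this
    omega
  · rintro h p (rfl | ⟨p, rfl, hp⟩)
    · simp
    · have := h p hp
      simp only [count_cons_self, count_cons_of_ne hxy]
      omega

lemma not_alternatesFrom_cons (hxy : x ≠ y) : ¬ AlternatesFrom (y :: t) x y := fun h => by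
  simpa [hxy] using (h [y] (prefix_cons_iff.2 (Or.inr ⟨[], rfl, nil_prefix⟩))).1

lemma alternate_iff_isChain :
    Alternate w x y ↔ (w.filter fun z => decide (z = x ∨ z = y)).IsChain (· ≠ ·) := Iff.rfl

lemma alternate_comm : Alternate w x y ↔ Alternate w y x := by
  simp only [Alternate, or_comm]

lemma alternate_cons_of_ne (hx : z ≠ x) (hy : z ≠ y) :
    Alternate (z :: t) x y ↔ Alternate t x y := by
  simp [alternate_iff_isChain, hx, hy]

lemma alternate_cons_self (hxy : x ≠ y) :
    Alternate (x :: t) x y ↔ AlternatesFrom t y x := by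
  induction t generalizing x y with
  | nil => simp [alternate_iff_isChain, alternatesFrom_nil]
  | cons z t ih =>
    by_cases hzx : z = x
    · subst hzx
      simp [alternate_iff_isChain, not_alternatesFrom_cons hxy.symm]
    by_cases hzy : z = y
    · subst hzy
      rw [alternatesFrom_cons_self hxy.symm, ← ih hxy.symm, alternate_comm]
      simp [alternate_iff_isChain, hxy]
    · rw [alternatesFrom_cons_of_ne hzy hzx, ← ih hxy]
      simp [alternate_iff_isChain, hzx, hzy]

theorem alternate_iff_alternatesFrom (hxy : x ≠ y) :
    Alternate w x y ↔ AlternatesFrom w x y ∨ AlternatesFrom w y x := by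
  induction w with
  | nil => simp [alternate_iff_isChain, alternatesFrom_nil]
  | cons z t ih =>
    by_cases hzx : z = x
    · subst hzx
      simp [alternate_cons_self hxy, alternatesFrom_cons_self hxy,
        not_alternatesFrom_cons hxy.symm]
    by_cases hzy : z = y
    · subst hzy
      rw [alternate_comm, alternate_cons_self hxy.symm, alternatesFrom_cons_self hxy.symm]
      simp [not_alternatesFrom_cons hxy]
    · rw [alternate_cons_of_ne hzx hzy, alternatesFrom_cons_of_ne hzx hzy,
        alternatesFrom_cons_of_ne hzy hzx, ih]

lemma AlternatesFrom.exists_count_lt (h : AlternatesFrom w x y) (hx : x ∈ w) (hxy : x ≠ y) :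
    ∃ p, p <+: w ∧ count y p < count x p := by
  induction w with
  | nil => simp at hx
  | cons z t ih =>
    by_cases hzx : z = x
    · subst hzx
      exact ⟨[z], cons_prefix_cons.2 ⟨rfl, nil_prefix⟩, by simp [hxy]⟩
    by_cases hzy : z = y
    · subst hzy
      exact absurd h (not_alternatesFrom_cons hxy)
    obtain ⟨p, hp, hlt⟩ := ih ((alternatesFrom_cons_of_ne hzx hzy).1 h)
      (by simpa [Ne.symm hzx] using hx)
    exact ⟨z :: p, cons_prefix_cons.2 ⟨rfl, hp⟩, by simpa [count_cons, hzx, hzy] using hlt⟩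

/-- Since `P ++ Q` is balanced, the imbalance `count x - count y` of a prefix of `Q ++ P` is
that of a prefix of `P ++ Q` minus the imbalance of `P`: it still ranges over a window of width
one. -/
lemma AlternatesFrom.append_comm (hc : count x (P ++ Q) = count y (P ++ Q))
    (h : AlternatesFrom (P ++ Q) x y) :
    AlternatesFrom (Q ++ P) x y ∨ AlternatesFrom (Q ++ P) y x := by
  have hshift : ∀ r, r <+: Q ++ P → count y r + count y P ≤ count x r + count x P ∧
      count x r + count x P ≤ count y r + count y P + 1 := by
    intro r hr
    rcases hr.prefix_or_eq_append with hr | ⟨t, ht, rfl⟩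
    · simpa [count_append, add_comm] using h (P ++ r) ((prefix_append_right_inj P).2 hr)
    · have := h t (ht.trans (prefix_append P Q))
      simp only [count_append] at hc ⊢
      omega
  have hP := h P (prefix_append P Q)
  rcases Nat.lt_or_ge (count y P) (count x P) with hlt | hge
  · exact Or.inr fun r hr => by have := hshift r hr; omega
  · exact Or.inl fun r hr => by have := hshift r hr; omega

lemma alternate_append_comm (hxy : x ≠ y) (hc : count x (P ++ Q) = count y (P ++ Q)) :
    Alternate (Q ++ P) x y ↔ Alternate (P ++ Q) x y := by
  have hc' : count x (Q ++ P) = count y (Q ++ P) := by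
    simp only [count_append] at hc ⊢
    omega
  suffices ∀ {A B : List V}, count x (A ++ B) = count y (A ++ B) →
      Alternate (A ++ B) x y → Alternate (B ++ A) x y from ⟨this hc', this hc⟩
  intro A B hc h
  rw [alternate_iff_alternatesFrom hxy] at h ⊢
  rcases h with h | h
  · exact h.append_comm hc
  · exact (h.append_comm hc.symm).symm

end Alternation

section Uniform

variable {V : Type*} [DecidableEq V] {w t : List V} {x y : V} {m : ℕ}

/-- `List.dedup` keeps the last occurrence of each letter. -/
lemma pair_sublist_dedup (hxy : x ≠ y) (hx : x ∈ w)
    (h : ∀ r, r <:+ w → count x r ≤ count y r) : [x, y] <+ w.dedup := by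
  induction w with
  | nil => simp at hx
  | cons a r ih =>
    have ih' := fun hx => ih hx fun r' hr' => h r' (hr'.trans (suffix_cons a r))
    by_cases ha : a ∈ r
    · rw [dedup_cons_of_mem ha]
      exact ih' (by rcases mem_cons.1 hx with rfl | hx <;> assumption)
    rw [dedup_cons_of_notMem ha]
    by_cases hax : a = x
    · subst hax
      have := h _ suffix_rfl
      simp only [count_cons_self, count_cons_of_ne hxy] at this
      exact (singleton_sublist.2 (mem_dedup.2 (count_pos_iff.1 (by omega)))).cons_cons a
    · exact (ih' ((mem_cons.1 hx).resolve_left (Ne.symm hax))).cons a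

/-- The letters occurring `m` times are appended in the order of their last occurrences, which
keeps every alternating pair `x y ⋯ x y` alternating. -/
def appendLeast (w : List V) (m : ℕ) : List V :=
  w ++ w.dedup.filter fun v => count v w = m

lemma alternatesFrom_appendLeast (hm : ∀ v, m ≤ count v w) (h : AlternatesFrom w x y)
    (hxy : x ≠ y) : AlternatesFrom (appendLeast w m) x y := by
  intro p hp
  rcases hp.prefix_or_eq_append with hp | ⟨t, ht, rfl⟩
  · exact h p hp
  set s := w.dedup.filter fun v => count v w = m
  have hs : s.Nodup := (nodup_dedup w).filter _
  have hle : ∀ v, count v t ≤ 1 := fun v =>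
    (ht.sublist.count_le v).trans (nodup_iff_count_le_one.1 hs v)
  have hzero : ∀ v, count v w ≠ m → count v t = 0 := fun v hv =>
    count_eq_zero.2 fun hvt => hv (by simpa using (mem_filter.1 (ht.subset hvt)).2)
  have horder : count x w = m → count y w = m → count y t ≤ count x t := by
    intro hxm hym
    by_cases hyt : y ∈ t
    · have hyw : y ∈ w := mem_dedup.1 (mem_filter.1 (ht.subset hyt)).1
      have hxw : x ∈ w := count_pos_iff.1 (by have := count_pos_iff.2 hyw; omega)
      have hsuf : ∀ r, r <:+ w → count x r ≤ count y r := by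
        rintro r ⟨q, rfl⟩
        have := (h q (prefix_append q r)).1
        simp only [count_append] at hxm hym
        omega
      have hpair : [x, y] <+ s := by
        simpa [hxm, hym] using (pair_sublist_dedup hxy hxw hsuf).filter
          (fun v => decide (count v w = m))
      exact (hle y).trans (count_pos_iff.2 (hs.mem_of_prefix_of_pair_sublist hpair ht hyt))
    · simp [count_eq_zero.2 hyt]
  have hw := h w prefix_rfl
  have := hm y
  have := hle x
  have := hle y
  simp only [count_append]
  by_cases hxm : count x w = m <;> by_cases hym : count y w = m
  · have := horder hxm hym
    omega
  · have := hzero y hym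
    omega
  · have := hzero x hxm
    omega
  · have := hzero x hxm
    have := hzero y hym
    omega

lemma alternate_appendLeast (hm : ∀ v, m ≤ count v w) (hxy : x ≠ y) :
    Alternate (appendLeast w m) x y ↔ Alternate w x y := by
  refine ⟨fun h => h.prefix ((prefix_append _ _).filter _), fun h => ?_⟩
  rw [alternate_iff_alternatesFrom hxy] at h ⊢
  exact h.imp (alternatesFrom_appendLeast hm · hxy) (alternatesFrom_appendLeast hm · hxy.symm)

lemma count_appendLeast (hm : 0 < m) (v : V) :
    count v (appendLeast w m) = count v w + if count v w = m then 1 else 0 := by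
  rw [appendLeast, count_append]
  congr 1
  split_ifs with hv
  · rw [count_filter (by simpa using hv), count_dedup, if_pos (count_pos_iff.1 (hv ▸ hm))]
  · exact count_eq_zero.2 fun h => hv (by simpa using (mem_filter.1 h).2)

end Uniform

section Representation

variable {V : Type*} [DecidableEq V] {G : SimpleGraph V} {w t P Q : List V} {u v x y : V}
  {m : ℕ}

def Represents (G : SimpleGraph V) (w : List V) : Prop :=
  (∀ v, v ∈ w) ∧ ∀ x y, x ≠ y → (G.Adj x y ↔ Alternate w x y)

lemma Represents.alternatesFrom_or (h : Represents G w) (hxy : G.Adj x y) :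
    AlternatesFrom w x y ∨ AlternatesFrom w y x :=
  (alternate_iff_alternatesFrom hxy.ne).1 ((h.2 x y hxy.ne).1 hxy)

lemma Represents.adj_of_alternatesFrom (h : Represents G w) (hxy : x ≠ y)
    (hw : AlternatesFrom w x y) : G.Adj x y :=
  (h.2 x y hxy).2 ((alternate_iff_alternatesFrom hxy).2 (Or.inl hw))

lemma Represents.appendLeast (h : Represents G w) (hm : ∀ v, m ≤ count v w) :
    Represents G (appendLeast w m) :=
  ⟨fun v => mem_append_left _ (h.1 v),
    fun x y hxy => (h.2 x y hxy).trans (alternate_appendLeast hm hxy).symm⟩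

lemma Represents.append_comm (h : Represents G (P ++ Q))
    (hc : ∀ x y, count x (P ++ Q) = count y (P ++ Q)) : Represents G (Q ++ P) :=
  ⟨fun v => by simpa [or_comm] using h.1 v,
    fun x y hxy => (h.2 x y hxy).trans (alternate_append_comm hxy (hc x y)).symm⟩

lemma Represents.exists_count_eq_of_le [Finite V] {M : ℕ} (k : ℕ) (h : Represents G w)
    (hle : ∀ v, count v w ≤ M) (hge : ∀ v, M ≤ count v w + k) :
    ∃ w', Represents G w' ∧ ∀ v, count v w' = M := by
  induction k generalizing w with
  | zero => exact ⟨w, h, fun v => le_antisymm (hle v) (hge v)⟩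
  | succ k ih =>
    by_cases huni : ∀ v, count v w = M
    · exact ⟨w, h, huni⟩
    obtain ⟨v, hv⟩ := not_forall.1 huni
    have : Nonempty V := ⟨v⟩
    obtain ⟨v₀, hv₀⟩ := Finite.exists_min fun v => count v w
    have hlt : count v₀ w < M := (hv₀ v).trans_lt ((hle v).lt_of_ne hv)
    have hpos : 0 < count v₀ w := count_pos_iff.2 (h.1 v₀)
    refine ih (h.appendLeast hv₀) (fun u => ?_) (fun u => ?_)
    all_goals
      rw [count_appendLeast hpos]
      have := hle u
      have := hge u
      have := hge v₀
      have := hv₀ u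
      split_ifs <;> omega

lemma Represents.exists_count_eq [Finite V] (h : Represents G w) :
    ∃ w' M, Represents G w' ∧ ∀ v, count v w' = M := by
  obtain ⟨w', hw', hc⟩ :=
    h.exists_count_eq_of_le w.length (fun _ => count_le_length) (fun _ => by omega)
  exact ⟨w', w.length, hw', hc⟩

lemma WordRepresentable.exists_represents_cons [Finite V] (h : WordRepresentable G) (u : V) :
    ∃ t, Represents G (u :: t) := by
  obtain ⟨w₀, hw₀⟩ := h
  obtain ⟨w, M, hw, hM⟩ := Represents.exists_count_eq hw₀
  obtain ⟨A, B, rfl⟩ := append_of_mem (hw.1 u)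
  exact ⟨B ++ A, hw.append_comm fun x y => (hM x).trans (hM y).symm⟩

def wordOrientation (G : SimpleGraph V) (w : List V) (x y : V) : Prop :=
  G.Adj x y ∧ AlternatesFrom w x y

lemma Represents.isOrientation (h : Represents G w) : IsOrientation G (wordOrientation G w) := by
  refine ⟨fun _ _ hxy => hxy.1, fun x y hxy => ⟨fun hxy' hyx => ?_, fun hyx => ⟨hxy, ?_⟩⟩⟩
  · obtain ⟨p, hp, hlt⟩ := hxy'.2.exists_count_lt (h.1 x) hxy.ne
    exact lt_irrefl _ (hlt.trans_le (hyx.2 p hp).1)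
  · exact (h.alternatesFrom_or hxy).resolve_right fun hyx' => hyx ⟨hxy.symm, hyx'⟩

lemma count_le_of_reflTransGen_wordOrientation
    (hxy : Relation.ReflTransGen (wordOrientation G w) x y) {p : List V} (hp : p <+: w) :
    count y p ≤ count x p := by
  induction hxy with
  | refl => exact le_rfl
  | tail _ hyz ih => exact ((hyz.2 p hp).1).trans ih

lemma Represents.isSemiTransitive (h : Represents G w) :
    IsSemiTransitive G (wordOrientation G w) := by
  refine ⟨fun v hv => ?_, fun k p hp => ?_⟩
  · obtain ⟨a, hva, hav⟩ := Relation.TransGen.head'_iff.1 hv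
    obtain ⟨q, hq, hlt⟩ := hva.2.exists_count_lt (h.1 v) hva.1.ne
    exact lt_irrefl _ (hlt.trans_le (count_le_of_reflTransGen_wordOrientation hav hq))
  have hanti : ∀ q, q <+: w → ∀ {i j}, i ≤ j → count (p j) q ≤ count (p i) q :=
    fun q hq _ _ hij =>
      (Fin.antitone_iff_succ_le (f := fun i => count (p i) q)).2
        (fun i => ((hp i).2 q hq).1) hij
  have hstrict : ∀ i j, i < j → ∃ q, q <+: w ∧ count (p j) q < count (p i) q := by
    intro i j hij
    obtain ⟨i, rfl⟩ := Fin.exists_castSucc_eq.2 (hij.trans_le (Fin.le_last j)).ne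
    obtain ⟨q, hq, hlt⟩ := (hp i).2.exists_count_lt (h.1 _) (hp i).1.ne
    exact ⟨q, hq, (hanti q hq (Fin.castSucc_lt_iff_succ_le.1 hij)).trans_lt hlt⟩
  by_cases hadj : G.Adj (p 0) (p (Fin.last k))
  swap
  · exact Or.inl hadj
  right
  have h0 : AlternatesFrom w (p 0) (p (Fin.last k)) := by
    refine (h.alternatesFrom_or hadj).resolve_right fun hrev => ?_
    have hpos : (0 : Fin (k + 1)) < Fin.last k :=
      (Fin.zero_le _).lt_of_ne fun h0 => hadj.ne (congrArg p h0)
    obtain ⟨q, hq, hlt⟩ := hstrict 0 (Fin.last k) hpos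
    exact lt_irrefl _ (hlt.trans_le (hrev q hq).1)
  intro i j hij
  have hne : p i ≠ p j := fun heq => by
    obtain ⟨q, -, hlt⟩ := hstrict i j hij
    exact lt_irrefl _ (heq ▸ hlt)
  have hij' : AlternatesFrom w (p i) (p j) := fun q hq => by
    have := hanti q hq hij.le
    have := hanti q hq (Fin.zero_le i)
    have := hanti q hq (Fin.le_last j)
    have := h0 q hq
    omega
  exact ⟨h.adj_of_alternatesFrom hne hij', hij'⟩

lemma Represents.wordOrientation_cons (h : Represents G (u :: t)) (hv : G.Adj u v) :
    wordOrientation G (u :: t) u v :=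
  ⟨hv, (h.alternatesFrom_or hv).resolve_right (not_alternatesFrom_cons hv.ne.symm)⟩

end Representation

/-- If a finite simple graph `G` is word-representable and `u` is an arbitrary vertex,
then `G` admits a semi-transitive orientation in which `u` is a source. -/
theorem exists_semiTransitive_orientation_with_source {V : Type*} [Fintype V]
    [DecidableEq V] (G : SimpleGraph V) (h : WordRepresentable G) (u : V) :
    ∃ rel : V → V → Prop, IsOrientation G rel ∧ IsSemiTransitive G rel ∧
      ∀ v : V, G.Adj u v → rel u v := by
  obtain ⟨t, ht⟩ := h.exists_represents_cons u
  exact ⟨wordOrientation G (u :: t), ht.isOrientation, ht.isSemiTransitive,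
    fun _ hv => ht.wordOrientation_cons hv⟩
end
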